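/- Inheritance of local control consistency under synchronous composition: let L(G_i) ⊆ E_i* for i = 1,2, E = E₁∪E₂, E_k ⊆ E with E₁∩E₂ ⊆ E_k, and let G_k be a generator over E_k. If the projection P_k^{i+k} : (E_i∪E_k)* → E_k* is LCC for (P_i^{i+k})⁻¹(L(G_i)) for i = 1,2, then the projection P_k : E* → E_k* is LCC for L = L(G₁ ∥ G₂ ∥ G_k). -/

import Mathlib

open scoped Classical

/-- Natural projection: erase letters not in `A`. -/
noncomputable def proj {Ev : Type*} (A : Set Ev) (w : List Ev) : List Ev :=
  w.filter (fun a => decide (a ∈ A))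

/-- Projection of a language. -/
noncomputable def projL {Ev : Type*} (A : Set Ev) (L : Set (List Ev)) : Set (List Ev) :=
  proj A '' L

/-- Words over an alphabet `A`, i.e., `A*`. -/
def star {Ev : Type*} (A : Set Ev) : Set (List Ev) := {w | ∀ a ∈ w, a ∈ A}

/-- Synchronous product of `L₁ ⊆ A*` and `L₂ ⊆ B*`. -/
noncomputable def sync {Ev : Type*} (A B : Set Ev) (L1 L2 : Set (List Ev)) :
    Set (List Ev) :=
  {w | w ∈ star (A ∪ B) ∧ proj A w ∈ L1 ∧ proj B w ∈ L2}

/-- Prefix closure of a language. -/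
def prefixCl {Ev : Type*} (L : Set (List Ev)) : Set (List Ev) := {w | ∃ v, w ++ v ∈ L}

/-- Controllability of `K` with respect to (prefix-closed) `L` and uncontrollable events `Eu`. -/
def controllable {Ev : Type*} (K L : Set (List Ev)) (Eu : Set Ev) : Prop :=
  ∀ s ∈ prefixCl K, ∀ u ∈ Eu, s ++ [u] ∈ L → s ++ [u] ∈ prefixCl K

/-- Supremal controllable sublanguage of `K` w.r.t. `N` and `U`. -/
noncomputable def supC {Ev : Type*} (K N : Set (List Ev)) (U : Set Ev) : Set (List Ev) :=
  ⋃₀ {M | M ⊆ K ∧ controllable M N U}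

/-- `proj A` is an `L`-observer. -/
def observer {Ev : Type*} (A : Set Ev) (L : Set (List Ev)) : Prop :=
  ∀ t ∈ projL A L, ∀ s ∈ prefixCl L, proj A s <+: t →
    ∃ u, s ++ u ∈ L ∧ proj A (s ++ u) = t

/-- `proj A` is locally control consistent (LCC) for `L` (w.r.t. uncontrollable events `Eu`). -/
def lcc {Ev : Type*} (A Eu : Set Ev) (L : Set (List Ev)) : Prop :=
  ∀ s ∈ L, ∀ σ ∈ A ∩ Eu, proj A s ++ [σ] ∈ projL A L →
    (∃ u, (∀ a ∈ u, a ∉ A) ∧ s ++ u ++ [σ] ∈ L) →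
    ∃ u, (∀ a ∈ u, a ∈ Eu ∧ a ∉ A) ∧ s ++ u ++ [σ] ∈ L

/-!
Project the witness `s u σ` onto `E₁ ∪ E_k` and `E₂ ∪ E_k`. There the local LCC hypotheses
yield uncontrollable detours `v₁` over `E₁ ∖ E_k` and `v₂` over `E₂ ∖ E_k`. Since
`E₁ ∩ E₂ ⊆ E_k`, the detour `v₁` is invisible to `G₂` and `G_k`, and `v₂` to `G₁` and `G_k`,
so `s v₁ v₂ σ` lies in the composed language.
-/

section Projection

variable {Ev : Type*}

@[simp]
lemma proj_append (A : Set Ev) (w v : List Ev) :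
    proj A (w ++ v) = proj A w ++ proj A v :=
  List.filter_append w v

lemma proj_eq_nil {A : Set Ev} {u : List Ev} (h : ∀ a ∈ u, a ∉ A) : proj A u = [] :=
  List.filter_eq_nil_iff.2 fun a ha => by simpa using h a ha

lemma proj_singleton_of_mem {A : Set Ev} {σ : Ev} (h : σ ∈ A) : proj A [σ] = [σ] := by
  simp [proj, h]

lemma proj_mem_star (A : Set Ev) (w : List Ev) : proj A w ∈ star A := fun _ ha =>
  of_decide_eq_true (List.mem_filter.1 ha).2

lemma forall_notMem_proj {A B : Set Ev} {u : List Ev} (h : ∀ a ∈ u, a ∉ B) :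
    ∀ a ∈ proj A u, a ∉ B := fun a ha => h a (List.mem_of_mem_filter ha)

lemma proj_proj {A B : Set Ev} (h : A ⊆ B) (w : List Ev) :
    proj A (proj B w) = proj A w := by
  simp only [proj, List.filter_filter]
  congr 1
  funext a
  by_cases ha : a ∈ A
  · simp [ha, h ha]
  · simp [ha]

lemma proj_append_mem_projL {A : Set Ev} {L : Set (List Ev)} {s u : List Ev} {σ : Ev}
    (hu : ∀ a ∈ u, a ∉ A) (hσ : σ ∈ A) (h : s ++ u ++ [σ] ∈ L) :
    proj A s ++ [σ] ∈ projL A L :=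
  ⟨_, h, by simp [proj_eq_nil hu, proj_singleton_of_mem hσ]⟩

lemma mem_sync_sync_iff {A B C : Set Ev} {L₁ L₂ L₃ : Set (List Ev)} {w : List Ev} :
    w ∈ sync A (B ∪ C) L₁ (sync B C L₂ L₃) ↔
      w ∈ star (A ∪ (B ∪ C)) ∧ proj A w ∈ L₁ ∧ proj B w ∈ L₂ ∧ proj C w ∈ L₃ := by
  simp only [sync, Set.mem_ofPred_eq, proj_proj Set.subset_union_left,
    proj_proj Set.subset_union_right, proj_mem_star, true_and]

end Projection

lemma exists_uncontrollable_path_of_lcc_inverseProj {Ev : Type*} {E K Eu : Set Ev}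
    {LG : Set (List Ev)} (hlcc : lcc K Eu {w | w ∈ star (E ∪ K) ∧ proj E w ∈ LG})
    {s u : List Ev} {σ : Ev} (hσ : σ ∈ K ∩ Eu) (hs : proj E s ∈ LG)
    (hu : ∀ a ∈ u, a ∉ K) (hsuσ : proj E (s ++ u ++ [σ]) ∈ LG) :
    ∃ v, (∀ a ∈ v, a ∈ Eu ∧ a ∈ E ∧ a ∉ K) ∧ proj E (s ++ v ++ [σ]) ∈ LG := by
  have hEK : E ⊆ E ∪ K := Set.subset_union_left
  have proj_mem_iff : ∀ w, proj (E ∪ K) w ∈ {w | w ∈ star (E ∪ K) ∧ proj E w ∈ LG} ↔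
      proj E w ∈ LG := fun w => by simp [proj_mem_star, proj_proj hEK]
  have hσEK : proj (E ∪ K) [σ] = [σ] := proj_singleton_of_mem (Or.inr hσ.1)
  have hu' := forall_notMem_proj (A := E ∪ K) hu
  have hw : proj (E ∪ K) s ++ proj (E ∪ K) u ++ [σ] ∈
      {w | w ∈ star (E ∪ K) ∧ proj E w ∈ LG} := by
    simpa [hσEK] using (proj_mem_iff _).2 hsuσ
  obtain ⟨v, hv, hsvσ⟩ := hlcc _ ((proj_mem_iff s).2 hs) σ hσ
    (proj_append_mem_projL hu' hσ.1 hw) ⟨_, hu', hw⟩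
  have hvE : ∀ a ∈ v, a ∈ E := fun a ha =>
    (hsvσ.1 a (by simp [ha])).resolve_right (hv a ha).2
  refine ⟨v, fun a ha => ⟨(hv a ha).1, hvE a ha, (hv a ha).2⟩, ?_⟩
  simpa [proj_proj hEK] using hsvσ.2

theorem stmt14_general {Ev : Type*} (E1 E2 Ek Eu : Set Ev) (hsh : E1 ∩ E2 ⊆ Ek)
    (LG1 LG2 LGk : Set (List Ev))
    (hlcc1 : lcc Ek Eu {w | w ∈ star (E1 ∪ Ek) ∧ proj E1 w ∈ LG1})
    (hlcc2 : lcc Ek Eu {w | w ∈ star (E2 ∪ Ek) ∧ proj E2 w ∈ LG2}) :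
    lcc Ek Eu (sync E1 (E2 ∪ Ek) LG1 (sync E2 Ek LG2 LGk)) := by
  rintro s hs σ hσ - ⟨u, hu, hsuσ⟩
  obtain ⟨hsStar, hs1, hs2, -⟩ := mem_sync_sync_iff.1 hs
  obtain ⟨-, hsuσ1, hsuσ2, hsuσk⟩ := mem_sync_sync_iff.1 hsuσ
  obtain ⟨v₁, hv₁, hsvσ1⟩ := exists_uncontrollable_path_of_lcc_inverseProj hlcc1 hσ hs1 hu hsuσ1
  obtain ⟨v₂, hv₂, hsvσ2⟩ := exists_uncontrollable_path_of_lcc_inverseProj hlcc2 hσ hs2 hu hsuσ2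
  have hv₁E2 : proj E2 v₁ = [] :=
    proj_eq_nil fun a ha h2 => (hv₁ a ha).2.2 (hsh ⟨(hv₁ a ha).2.1, h2⟩)
  have hv₂E1 : proj E1 v₂ = [] :=
    proj_eq_nil fun a ha h1 => (hv₂ a ha).2.2 (hsh ⟨h1, (hv₂ a ha).2.1⟩)
  have hv₁Ek : proj Ek v₁ = [] := proj_eq_nil fun a ha => (hv₁ a ha).2.2
  have hv₂Ek : proj Ek v₂ = [] := proj_eq_nil fun a ha => (hv₂ a ha).2.2
  have huEk : proj Ek u = [] := proj_eq_nil hu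
  refine ⟨v₁ ++ v₂, ?_, mem_sync_sync_iff.2 ⟨?_, ?_, ?_, ?_⟩⟩
  · simp only [List.mem_append]
    rintro a (ha | ha)
    exacts [⟨(hv₁ a ha).1, (hv₁ a ha).2.2⟩, ⟨(hv₂ a ha).1, (hv₂ a ha).2.2⟩]
  · intro a ha
    simp only [List.mem_append, List.mem_singleton] at ha
    rcases ha with (ha | ha | ha) | rfl
    exacts [hsStar a ha, Or.inl (hv₁ a ha).2.1, Or.inr (Or.inl (hv₂ a ha).2.1),
      Or.inr (Or.inr hσ.1)]
  · simpa [hv₂E1] using hsvσ1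
  · simpa [hv₁E2] using hsvσ2
  · simpa [hv₁Ek, hv₂Ek, huEk] using hsuσk

/-- inheritance of local control consistency under synchronous composition. -/
theorem stmt14 {Ev : Type*} (E1 E2 Ek Eu : Set Ev) (hsh : E1 ∩ E2 ⊆ Ek)
    (LG1 LG2 LGk : Set (List Ev))
    (hLG1 : LG1 ⊆ star E1) (hLG2 : LG2 ⊆ star E2) (hLGk : LGk ⊆ star Ek)
    (hLG1c : prefixCl LG1 = LG1) (hLG2c : prefixCl LG2 = LG2) (hLGkc : prefixCl LGk = LGk)
    (hlcc1 : lcc Ek Eu {w | w ∈ star (E1 ∪ Ek) ∧ proj E1 w ∈ LG1})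
    (hlcc2 : lcc Ek Eu {w | w ∈ star (E2 ∪ Ek) ∧ proj E2 w ∈ LG2}) :
    lcc Ek Eu (sync E1 (E2 ∪ Ek) LG1 (sync E2 Ek LG2 LGk)) :=
  stmt14_general E1 E2 Ek Eu hsh LG1 LG2 LGk hlcc1 hlcc2
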